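/- (Characterization of right invertibility, used in Lemma 2) An element F of the free Cartesian monoid CM is right invertible if and only if, in the CM normal form of F (a binary tree built from pairing ⟨-,-⟩ with a shift at each leaf), no shift occurring at a leaf is a final segment (reading the string of L's and R's left to right) of the shift occurring at another leaf. -/

import Mathlib

/-- Terms of the free (quasi-)Cartesian monoid: constants `I, L, R`,
composition `comp` (written `*` in the paper) and pairing `pair`. -/
inductive Term : Type
  | I : Term
  | L : Term
  | R : Term
  | comp : Term → Term → Term
  | pair : Term → Term → Term
  deriving DecidableEq

open Term

/-- The rewrite rules (1)-(7), indexed by their number. -/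
inductive Rule : ℕ → Term → Term → Prop
  | r1 (x y : Term) : Rule 1 (comp L (pair x y)) x
  | r2 (x y : Term) : Rule 2 (comp R (pair x y)) y
  | r3 (x y z : Term) : Rule 3 (comp (pair x y) z) (pair (comp x z) (comp y z))
  | r4 (x : Term) : Rule 4 (comp I x) x
  | r5 (x : Term) : Rule 5 (comp x I) x
  | r6 (x : Term) : Rule 6 (pair (comp L x) (comp R x)) x
  | r7 : Rule 7 (pair L R) I

/-- The congruence generated by associativity of `comp`. -/
inductive AssocEq : Term → Term → Prop
  | assoc (a b c : Term) : AssocEq (comp (comp a b) c) (comp a (comp b c))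
  | refl (a : Term) : AssocEq a a
  | symm {a b : Term} : AssocEq a b → AssocEq b a
  | trans {a b c : Term} : AssocEq a b → AssocEq b c → AssocEq a c
  | comp_congr {a a' b b' : Term} :
      AssocEq a a' → AssocEq b b' → AssocEq (comp a b) (comp a' b')
  | pair_congr {a a' b b' : Term} :
      AssocEq a a' → AssocEq b b' → AssocEq (pair a b) (pair a' b')

/-- One-step rewriting by a rule whose index lies in `J`,
closed under replacement of subterms (monotone closure). -/
inductive Step (J : Set ℕ) : Term → Term → Prop
  | rule {n : ℕ} {x y : Term} : n ∈ J → Rule n x y → Step J x y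
  | comp_left {a a' b : Term} : Step J a a' → Step J (comp a b) (comp a' b)
  | comp_right {a b b' : Term} : Step J b b' → Step J (comp a b) (comp a b')
  | pair_left {a a' b : Term} : Step J a a' → Step J (pair a b) (pair a' b)
  | pair_right {a b b' : Term} : Step J b b' → Step J (pair a b) (pair a b')

/-- One-step rewriting modulo associativity. -/
def StepA (J : Set ℕ) (a b : Term) : Prop :=
  ∃ a' b', AssocEq a a' ∧ Step J a' b' ∧ AssocEq b' b

/-- Many-step rewriting `↠_J`: the monotone reflexive transitive closure of
one-step rewriting by the rules in `J`, modulo associativity. -/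
def Red (J : Set ℕ) (a b : Term) : Prop :=
  ∃ c, Relation.ReflTransGen (StepA J) a c ∧ AssocEq c b

/-- `a` is in normal form w.r.t. the rules in `J` (modulo associativity). -/
def NF (J : Set ℕ) (a : Term) : Prop := ∀ b, ¬ StepA J a b

/-- Rules (1)-(7). -/
def rules17 : Set ℕ := {n | 1 ≤ n ∧ n ≤ 7}
/-- Rules (1)-(5). -/
def rules15 : Set ℕ := {n | 1 ≤ n ∧ n ≤ 5}
/-- Rules (1)-(4). -/
def rules14 : Set ℕ := {n | 1 ≤ n ∧ n ≤ 4}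
/-- Rules (5), (6), (7). -/
def rules567 : Set ℕ := {5, 6, 7}

/-- The congruence `=_CM` generated by the Cartesian monoid axioms (i)-(iv)
and the monoid axioms for `comp` with unit `I`. -/
inductive CMEq : Term → Term → Prop
  | proj_left (f g : Term) : CMEq (comp L (pair f g)) f
  | proj_right (f g : Term) : CMEq (comp R (pair f g)) g
  | lift (f g h : Term) : CMEq (comp (pair f g) h) (pair (comp f h) (comp g h))
  | surj : CMEq (pair L R) I
  | assoc (a b c : Term) : CMEq (comp (comp a b) c) (comp a (comp b c))
  | one_mul (a : Term) : CMEq (comp I a) a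
  | mul_one (a : Term) : CMEq (comp a I) a
  | refl (a : Term) : CMEq a a
  | symm {a b : Term} : CMEq a b → CMEq b a
  | trans {a b c : Term} : CMEq a b → CMEq b c → CMEq a c
  | comp_congr {a a' b b' : Term} :
      CMEq a a' → CMEq b b' → CMEq (comp a b) (comp a' b')
  | pair_congr {a a' b b' : Term} :
      CMEq a a' → CMEq b b' → CMEq (pair a b) (pair a' b')

/-- The congruence `=_CQ` generated by the axioms (i)-(iii)
and the monoid axioms (no surjectivity `⟨L,R⟩ = I`). -/
inductive CQEq : Term → Term → Prop
  | proj_left (f g : Term) : CQEq (comp L (pair f g)) f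
  | proj_right (f g : Term) : CQEq (comp R (pair f g)) g
  | lift (f g h : Term) : CQEq (comp (pair f g) h) (pair (comp f h) (comp g h))
  | assoc (a b c : Term) : CQEq (comp (comp a b) c) (comp a (comp b c))
  | one_mul (a : Term) : CQEq (comp I a) a
  | mul_one (a : Term) : CQEq (comp a I) a
  | refl (a : Term) : CQEq a a
  | symm {a b : Term} : CQEq a b → CQEq b a
  | trans {a b c : Term} : CQEq a b → CQEq b c → CQEq a c
  | comp_congr {a a' b b' : Term} :
      CQEq a a' → CQEq b b' → CQEq (comp a b) (comp a' b')
  | pair_congr {a a' b b' : Term} :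
      CQEq a a' → CQEq b b' → CQEq (pair a b) (pair a' b')

/-- An injective numerical encoding of terms, used to state computability. -/
def encodeTerm : Term → ℕ
  | I => 0
  | L => 1
  | R => 2
  | comp a b => 2 * Nat.pair (encodeTerm a) (encodeTerm b) + 3
  | pair a b => 2 * Nat.pair (encodeTerm a) (encodeTerm b) + 4

/-- A numerical encoding of finite lists of terms. -/
def encodeTermList : List Term → ℕ
  | [] => 0
  | a :: l => Nat.pair (encodeTerm a) (encodeTermList l) + 1

/-- The product of a list of terms (with `I` as the empty product). -/
def listProd : List Term → Term
  | [] => I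
  | a :: l => comp a (listProd l)

/-- `=_CQ` as a setoid. -/
def cqSetoid : Setoid Term :=
  ⟨CQEq, ⟨fun a => CQEq.refl a, fun h => h.symm, fun h₁ h₂ => h₁.trans h₂⟩⟩

/-- The free categorical quasiproduct monoid `CQ = T / =_CQ`. -/
def CQ : Type := Quotient cqSetoid

/-- `=_CM` as a setoid. -/
def cmSetoid : Setoid Term :=
  ⟨CMEq, ⟨fun a => CMEq.refl a, fun h => h.symm, fun h₁ h₂ => h₁.trans h₂⟩⟩

/-- The free Cartesian monoid `CM = T / =_CM`. -/
def CM : Type := Quotient cmSetoid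

/-- The submonoid of `CQ` generated by (the classes of) the members of `B`,
as a set of elements of `CQ`. -/
def genSubmonoidCQ (B : List Term) : Set CQ :=
  {x | ∃ l : List Term, (∀ t ∈ l, t ∈ B) ∧ Quotient.mk cqSetoid (listProd l) = x}

/-- The submonoid of `CM` generated by (the classes of) the members of `B`,
as a set of elements of `CM`. -/
def genSubmonoidCM (B : List Term) : Set CM :=
  {x | ∃ l : List Term, (∀ t ∈ l, t ∈ B) ∧ Quotient.mk cmSetoid (listProd l) = x}

/-- A shift: a product (under `comp`) of copies of `L` and `R`,
with `I` as the empty product. -/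
inductive IsShift : Term → Prop
  | unit : IsShift I
  | left : IsShift L
  | right : IsShift R
  | comp {s t : Term} : IsShift s → IsShift t → IsShift (comp s t)

/-- The CQ normal form (normal form w.r.t. rules (1)-(5)) of `X` is a shift. -/
def nfIsShift (X : Term) : Prop :=
  ∃ N, Red rules15 X N ∧ NF rules15 N ∧ IsShift N

/-- The product `F_0 * ⋯ * F_{n-1}` of the first `n` values of a sequence. -/
def prodTake (f : ℕ → Term) (n : ℕ) : Term := listProd ((List.range n).map f)

/-- `B` covers Cantor space: there is an infinite sequence of members of `B`
such that for each shift `S` some finite initial product composed with `S`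
has a CQ normal form that is not a shift. -/
def Covers (B : List Term) : Prop :=
  ∃ f : ℕ → Term, (∀ n, f n ∈ B) ∧
    ∀ S, IsShift S → ∃ n, ¬ nfIsShift (comp S (prodTake f n))

/-- The shift `S` is bad for `B`: for every finite sequence of members of `B`,
the CQ normal form of `S*F_1*⋯*F_n` is a shift. -/
def BadFor (B : List Term) (S : Term) : Prop :=
  ∀ l : List Term, (∀ t ∈ l, t ∈ B) → nfIsShift (comp S (listProd l))

/-- The length of a shift: the number of occurrences of `L` and `R`. -/
def lenLR : Term → ℕ
  | I => 0
  | L => 1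
  | R => 1
  | comp a b => lenLR a + lenLR b
  | pair a b => lenLR a + lenLR b

/-- `S` is extenuative for `B`: it is bad for `B` and the CQ normal forms of
`S*F_1*⋯*F_k` (for `F_i` in `B`) have unbounded length. -/
def Extenuative (B : List Term) (S : Term) : Prop :=
  BadFor B S ∧ ∀ n : ℕ, ∃ l : List Term, (∀ t ∈ l, t ∈ B) ∧
    ∃ N, Red rules15 (comp S (listProd l)) N ∧ NF rules15 N ∧ n ≤ lenLR N

/-- A term represents a right invertible element of CM. -/
def RightInvCM (F : Term) : Prop := ∃ G, CMEq (comp F G) I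

/-- The word (in `{L, R}`, read left to right, `L = false`, `R = true`) of a
shift. -/
def shiftWord : Term → List Bool
  | Term.I => []
  | Term.L => [false]
  | Term.R => [true]
  | Term.comp a b => shiftWord a ++ shiftWord b
  | Term.pair _ _ => []

/-- The list of the words of the shifts at the leaves of (the binary tree of)
a normal form, from left to right. -/
def leafWords : Term → List (List Bool)
  | Term.pair a b => leafWords a ++ leafWords b
  | t => [shiftWord t]

/-!
A CM normal form `N` is a binary tree of shifts `w₁, …, wₙ`. If no `wᵢ` is a suffix of another
`wⱼ`, a right inverse `G` is a trie: `wᵢ * G` only reads the branch of `G` at the address `wᵢ`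
(read from the right), and placing there the projection onto the `i`-th leaf gives `N * G = I`
by surjective pairing. Conversely, interpret CM in the self-maps of Cantor space `X ≃ X × X`.
If `N * G = I`, the map `N` is surjective, so at every node the maps of the two subtrees are
jointly surjective, and each leaf map is a surjective projection of its subtree's map. Were
`wⱼ = s ++ wᵢ`, the projection reaching leaf `j` would factor through the other subtree's map,
hence be constant.
-/

theorem List.pairwise_and_swap_iff_forall_ne {α : Type*} {R : α → α → Prop} {l : List α} :
    l.Pairwise (fun a b => R a b ∧ R b a) ↔
      ∀ (i j : ℕ) (hi : i < l.length) (hj : j < l.length),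
        i ≠ j → R (l.get ⟨i, hi⟩) (l.get ⟨j, hj⟩) := by
  rw [List.pairwise_iff_getElem]
  refine ⟨fun h i j hi hj hij => ?_,
    fun h i j hi hj hij => ⟨h i j hi hj hij.ne, h j i hj hi hij.ne'⟩⟩
  rcases Nat.lt_or_gt_of_ne hij with hlt | hgt
  · exact (h i j hi hj hlt).1
  · exact (h j i hj hi hgt).2

def SuffixIncomparable {α : Type*} (u v : List α) : Prop := ¬ u <:+ v ∧ ¬ v <:+ u

theorem SuffixIncomparable.symm {α : Type*} {u v : List α} (h : SuffixIncomparable u v) :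
    SuffixIncomparable v u :=
  ⟨h.2, h.1⟩

theorem suffixIncomparable_append_singleton_iff {α : Type*} {u v : List α} {c : α} :
    SuffixIncomparable (u ++ [c]) (v ++ [c]) ↔ SuffixIncomparable u v := by
  simp only [SuffixIncomparable, List.suffix_append_self_iff]

theorem AssocEq.cmEq {a b : Term} (h : AssocEq a b) : CMEq a b := by
  induction h with
  | assoc a b c => exact .assoc a b c
  | refl a => exact .refl a
  | symm _ ih => exact ih.symm
  | trans _ _ ih₁ ih₂ => exact ih₁.trans ih₂
  | comp_congr _ _ ih₁ ih₂ => exact ih₁.comp_congr ih₂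
  | pair_congr _ _ ih₁ ih₂ => exact ih₁.pair_congr ih₂

theorem CMEq.pair_comp_L_comp_R (x : Term) : CMEq (pair (comp L x) (comp R x)) x :=
  (CMEq.lift L R x).symm.trans ((CMEq.surj.comp_congr (.refl x)).trans (.one_mul x))

theorem Rule.cmEq {n : ℕ} {a b : Term} (h : Rule n a b) : CMEq a b := by
  cases h with
  | r1 => exact .proj_left _ _
  | r2 => exact .proj_right _ _
  | r3 => exact .lift _ _ _
  | r4 => exact .one_mul _
  | r5 => exact .mul_one _
  | r6 => exact .pair_comp_L_comp_R _
  | r7 => exact .surj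

theorem Step.cmEq {J : Set ℕ} {a b : Term} (h : Step J a b) : CMEq a b := by
  induction h with
  | rule _ hr => exact hr.cmEq
  | comp_left _ ih => exact ih.comp_congr (.refl _)
  | comp_right _ ih => exact (CMEq.refl _).comp_congr ih
  | pair_left _ ih => exact ih.pair_congr (.refl _)
  | pair_right _ ih => exact (CMEq.refl _).pair_congr ih

theorem StepA.cmEq {J : Set ℕ} {a b : Term} : StepA J a b → CMEq a b
  | ⟨_, _, h₁, h₂, h₃⟩ => h₁.cmEq.trans (h₂.cmEq.trans h₃.cmEq)

theorem Red.cmEq {J : Set ℕ} {a b : Term} (h : Red J a b) : CMEq a b := by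
  obtain ⟨c, hac, hcb⟩ := h
  refine CMEq.trans ?_ hcb.cmEq
  clear hcb
  induction hac with
  | refl => exact .refl a
  | tail _ hs ih => exact ih.trans hs.cmEq

section NormalForms

variable {J : Set ℕ}

theorem StepA.of_rule {n : ℕ} {a b : Term} (hn : n ∈ J) (h : Rule n a b) : StepA J a b :=
  ⟨a, b, .refl a, .rule hn h, .refl b⟩

theorem StepA.of_assocEq_left {a a' b : Term} (h : AssocEq a a') (h' : StepA J a' b) :
    StepA J a b :=
  let ⟨a₁, b₁, h₁, h₂, h₃⟩ := h'
  ⟨a₁, b₁, h.trans h₁, h₂, h₃⟩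

theorem StepA.comp_left {a a' b : Term} : StepA J a a' → StepA J (comp a b) (comp a' b)
  | ⟨_, _, h₁, h₂, h₃⟩ =>
    ⟨_, _, h₁.comp_congr (.refl b), h₂.comp_left, h₃.comp_congr (.refl b)⟩

theorem StepA.comp_right {a b b' : Term} : StepA J b b' → StepA J (comp a b) (comp a b')
  | ⟨_, _, h₁, h₂, h₃⟩ => ⟨_, _, (AssocEq.refl a).comp_congr h₁, h₂.comp_right,
      (AssocEq.refl a).comp_congr h₃⟩

theorem StepA.pair_left {a a' b : Term} : StepA J a a' → StepA J (pair a b) (pair a' b)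
  | ⟨_, _, h₁, h₂, h₃⟩ =>
    ⟨_, _, h₁.pair_congr (.refl b), h₂.pair_left, h₃.pair_congr (.refl b)⟩

theorem StepA.pair_right {a b b' : Term} : StepA J b b' → StepA J (pair a b) (pair a b')
  | ⟨_, _, h₁, h₂, h₃⟩ => ⟨_, _, (AssocEq.refl a).pair_congr h₁, h₂.pair_right,
      (AssocEq.refl a).pair_congr h₃⟩

theorem NF.of_comp_left {a b : Term} (h : NF J (comp a b)) : NF J a :=
  fun _ h' => h _ h'.comp_left

theorem NF.of_comp_right {a b : Term} (h : NF J (comp a b)) : NF J b :=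
  fun _ h' => h _ h'.comp_right

theorem NF.of_pair_left {a b : Term} (h : NF J (pair a b)) : NF J a :=
  fun _ h' => h _ h'.pair_left

theorem NF.of_pair_right {a b : Term} (h : NF J (pair a b)) : NF J b :=
  fun _ h' => h _ h'.pair_right

end NormalForms

theorem IsShift.exists_stepA_comp_pair {a : Term} (ha : IsShift a) (x y : Term) :
    ∃ b, StepA rules17 (Term.comp a (pair x y)) b := by
  induction ha with
  | unit => exact ⟨_, .of_rule (by simp [rules17]) (.r4 _)⟩
  | left => exact ⟨_, .of_rule (by simp [rules17]) (.r1 x y)⟩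
  | right => exact ⟨_, .of_rule (by simp [rules17]) (.r2 x y)⟩
  | comp _ _ _ ih =>
    obtain ⟨b, hb⟩ := ih
    exact ⟨_, .of_assocEq_left (.assoc _ _ _) hb.comp_right⟩

inductive IsShiftTree : Term → Prop
  | leaf {t : Term} : IsShift t → IsShiftTree t
  | node {a b : Term} : IsShiftTree a → IsShiftTree b → IsShiftTree (pair a b)

theorem IsShiftTree.of_nf {N : Term} (h : NF rules17 N) : IsShiftTree N := by
  induction N with
  | I => exact .leaf .unit
  | L => exact .leaf .left
  | R => exact .leaf .right
  | pair a b iha ihb => exact .node (iha h.of_pair_left) (ihb h.of_pair_right)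
  | comp a b iha ihb =>
    have ha : IsShift a := by
      cases iha h.of_comp_left with
      | leaf ha => exact ha
      | node => exact absurd (.of_rule (by simp [rules17]) (.r3 _ _ b)) (h _)
    have hb : IsShift b := by
      cases ihb h.of_comp_right with
      | leaf hb => exact hb
      | node =>
        obtain ⟨_, hstep⟩ := ha.exists_stepA_comp_pair _ _
        exact absurd hstep (h _)
    exact .leaf (ha.comp hb)

theorem IsShift.leafWords_eq {t : Term} (h : IsShift t) : leafWords t = [shiftWord t] := by
  cases h <;> rfl

def Term.letter : Bool → Term
  | false => L
  | true => R

def Term.ofWord : List Bool → Term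
  | [] => I
  | c :: w => comp (letter c) (ofWord w)

theorem ofWord_append_comp (u v : List Bool) (A : Term) :
    CMEq (comp (ofWord (u ++ v)) A) (comp (ofWord u) (comp (ofWord v) A)) := by
  induction u with
  | nil => exact (CMEq.one_mul _).symm
  | cons c u ih =>
    exact (CMEq.assoc _ _ _).trans
      (((CMEq.refl (letter c)).comp_congr ih).trans (CMEq.assoc _ _ _).symm)

theorem IsShift.comp_cmEq_ofWord_comp {t : Term} (h : IsShift t) (A : Term) :
    CMEq (Term.comp t A) (Term.comp (ofWord (shiftWord t)) A) := by
  induction h generalizing A with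
  | unit => exact .refl _
  | left => exact (CMEq.mul_one L).symm.comp_congr (.refl A)
  | right => exact (CMEq.mul_one R).symm.comp_congr (.refl A)
  | comp _ _ ihs iht =>
    exact (CMEq.assoc _ _ _).trans (((CMEq.refl _).comp_congr (iht A)).trans
      ((ihs _).trans (ofWord_append_comp _ _ A).symm))

section Semantics

variable {X : Type*} (e : X ≃ X × X)

/-- Any `e : X ≃ X × X` makes `X → X` a Cartesian monoid. -/
def denote : Term → X → X
  | I => id
  | L => fun x => (e x).1
  | R => fun x => (e x).2
  | comp a b => denote a ∘ denote b
  | pair a b => fun x => e.symm (denote a x, denote b x)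

theorem CMEq.denote_eq {a b : Term} (h : CMEq a b) : denote e a = denote e b := by
  induction h with
  | proj_left | proj_right | surj => funext x; simp [denote]
  | lift | assoc | one_mul | mul_one | refl => rfl
  | symm _ ih => exact ih.symm
  | trans _ _ ih₁ ih₂ => exact ih₁.trans ih₂
  | comp_congr _ _ ih₁ ih₂ => simp only [denote, ih₁, ih₂]
  | pair_congr _ _ ih₁ ih₂ => simp only [denote, ih₁, ih₂]

theorem denote_ofWord_append (u v : List Bool) :
    denote e (ofWord (u ++ v)) = denote e (ofWord u) ∘ denote e (ofWord v) :=
  (ofWord_append_comp u v I).denote_eq e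

theorem IsShift.denote_eq {t : Term} (h : IsShift t) :
    denote e t = denote e (ofWord (shiftWord t)) :=
  (h.comp_cmEq_ofWord_comp I).denote_eq e

theorem IsShiftTree.exists_surjective_comp_denote_eq {N : Term} (hN : IsShiftTree N)
    {w : List Bool} (hw : w ∈ leafWords N) :
    ∃ π : X → X, Function.Surjective π ∧ π ∘ denote e N = denote e (ofWord w) := by
  have surjective_fst : Function.Surjective fun x => (e x).1 :=
    fun y => ⟨e.symm (y, y), by simp⟩
  have surjective_snd : Function.Surjective fun x => (e x).2 :=
    fun y => ⟨e.symm (y, y), by simp⟩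
  induction hN with
  | leaf ht =>
    rw [ht.leafWords_eq, List.mem_singleton] at hw
    exact ⟨id, Function.surjective_id, hw ▸ ht.denote_eq e⟩
  | node _ _ iha ihb =>
    rcases List.mem_append.1 hw with hw | hw
    · obtain ⟨π, hπ, hπN⟩ := iha hw
      exact ⟨π ∘ fun x => (e x).1, hπ.comp surjective_fst, by
        rw [← hπN]; funext x; simp [denote]⟩
    · obtain ⟨π, hπ, hπN⟩ := ihb hw
      exact ⟨π ∘ fun x => (e x).2, hπ.comp surjective_snd, by
        rw [← hπN]; funext x; simp [denote]⟩

/-- If `v = s ++ u`, then the surjection reading `v` off `g` factors through `f`, so by joint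
surjectivity it is constant. -/
theorem not_suffix_of_jointly_surjective [Nontrivial X] {f g : X → X}
    (hfg : ∀ y z, ∃ x, f x = y ∧ g x = z) {u v : List Bool}
    (hu : ∃ π, π ∘ f = denote e (ofWord u))
    (hv : ∃ π, Function.Surjective π ∧ π ∘ g = denote e (ofWord v)) : ¬ u <:+ v := by
  rintro ⟨s, rfl⟩
  obtain ⟨πu, hπu⟩ := hu
  obtain ⟨πv, hπv, hπvg⟩ := hv
  obtain ⟨y₀⟩ : Nonempty X := inferInstance
  have hconst : ∀ z, πv z = denote e (ofWord s) (πu y₀) := fun z => by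
    obtain ⟨x, rfl, rfl⟩ := hfg y₀ z
    rw [← Function.comp_apply (f := πv), hπvg, denote_ofWord_append, ← hπu]
    rfl
  obtain ⟨a, b, hab⟩ := exists_pair_ne X
  obtain ⟨za, rfl⟩ := hπv a
  obtain ⟨zb, rfl⟩ := hπv b
  exact hab ((hconst za).trans (hconst zb).symm)

theorem IsShiftTree.pairwise_suffixIncomparable_of_surjective [Nontrivial X] {N : Term}
    (hN : IsShiftTree N) (hs : Function.Surjective (denote e N)) :
    (leafWords N).Pairwise SuffixIncomparable := by
  induction hN with
  | leaf ht => simp [ht.leafWords_eq]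
  | node ha hb iha ihb =>
    have hab : ∀ y z, ∃ x, denote e _ x = y ∧ denote e _ x = z := fun y z => by
      obtain ⟨x, hx⟩ := hs (e.symm (y, z))
      exact ⟨x, by simpa [denote] using hx⟩
    refine List.pairwise_append.2 ⟨iha fun y => (hab y y).imp fun _ h => h.1,
      ihb fun z => (hab z z).imp fun _ h => h.2, fun u hu v hv => ⟨?_, ?_⟩⟩
    · exact not_suffix_of_jointly_surjective e hab
        ((ha.exists_surjective_comp_denote_eq e hu).imp fun _ h => h.2)
        (hb.exists_surjective_comp_denote_eq e hv)
    · exact not_suffix_of_jointly_surjective e (fun z y => (hab y z).imp fun _ h => h.symm)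
        ((hb.exists_surjective_comp_denote_eq e hv).imp fun _ h => h.2)
        (ha.exists_surjective_comp_denote_eq e hu)

end Semantics

theorem IsShiftTree.pairwise_suffixIncomparable_of_cmEq_comp {N G : Term} (hN : IsShiftTree N)
    (hG : CMEq (comp N G) I) : (leafWords N).Pairwise SuffixIncomparable :=
  let e : (ℕ → Bool) ≃ (ℕ → Bool) × (ℕ → Bool) :=
    (Equiv.arrowCongr Equiv.natSumNatEquivNat.symm (.refl Bool)).trans
      (Equiv.sumArrowEquivProdArrow ℕ ℕ Bool)
  hN.pairwise_suffixIncomparable_of_surjective e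
    fun x => ⟨denote e G x, congrFun (hG.denote_eq e) x⟩

/-- The component of `A` at each leaf position of `N`: by surjective pairing, the tree `N` with
these leaves is `A` again. -/
def leafTargets : Term → Term → List Term
  | pair a b, A => leafTargets a (comp L A) ++ leafTargets b (comp R A)
  | _, A => [A]

theorem length_leafTargets (N A : Term) : (leafTargets N A).length = (leafWords N).length := by
  induction N generalizing A with
  | pair a b iha ihb => simp [leafTargets, leafWords, iha, ihb]
  | _ => rfl

theorem IsShiftTree.cmEq_comp_of_forall_mem_zip {N G A : Term} (hN : IsShiftTree N)
    (h : ∀ e ∈ (leafWords N).zip (leafTargets N A), CMEq (comp (ofWord e.1) G) e.2) :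
    CMEq (comp N G) A := by
  induction hN generalizing A with
  | @leaf t ht =>
    have hmem : (shiftWord t, A) ∈ (leafWords t).zip (leafTargets t A) := by
      rw [ht.leafWords_eq]; cases ht <;> simp [leafTargets]
    exact (ht.comp_cmEq_ofWord_comp G).trans (h _ hmem)
  | @node a b _ _ iha ihb =>
    have hzip : (leafWords (pair a b)).zip (leafTargets (pair a b) A) =
        (leafWords a).zip (leafTargets a (comp L A)) ++
          (leafWords b).zip (leafTargets b (comp R A)) :=
      List.zip_append (length_leafTargets a _).symm
    rw [hzip] at h
    have hLA := iha fun e he => h e (List.mem_append_left _ he)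
    have hRA := ihb fun e he => h e (List.mem_append_right _ he)
    exact (CMEq.lift a b G).trans ((hLA.pair_congr hRA).trans (.pair_comp_L_comp_R A))

def stripLast {α β : Type*} [DecidableEq α] (c : α) (es : List (List α × β)) :
    List (List α × β) :=
  es.filterMap fun e => if e.1.getLast? = some c then some (e.1.dropLast, e.2) else none

section StripLast

variable {α β : Type*} [DecidableEq α] {c : α} {es : List (List α × β)}

theorem mem_stripLast {w : List α} {t : β} :
    (w, t) ∈ stripLast c es ↔ (w ++ [c], t) ∈ es := by
  simp only [stripLast, List.mem_filterMap, Option.ite_none_right_eq_some, Option.some.injEq]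
  constructor
  · rintro ⟨⟨u, s⟩, he, hu, hus⟩
    obtain ⟨rfl, rfl⟩ := Prod.mk.inj hus
    rwa [List.dropLast_append_getLast? c hu]
  · exact fun he => ⟨_, he, by simp⟩

theorem pairwise_stripLast (h : (es.map Prod.fst).Pairwise SuffixIncomparable) :
    ((stripLast c es).map Prod.fst).Pairwise SuffixIncomparable := by
  rw [List.pairwise_map] at h ⊢
  refine List.pairwise_filterMap.2 (h.imp fun {e e'} he b hb b' hb' => ?_)
  simp only [Option.ite_none_right_eq_some, Option.some.injEq] at hb hb'
  obtain ⟨hc, rfl⟩ := hb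
  obtain ⟨hc', rfl⟩ := hb'
  rwa [← suffixIncomparable_append_singleton_iff (c := c), List.dropLast_append_getLast? c hc,
    List.dropLast_append_getLast? c hc']

end StripLast

theorem cmEq_ofWord_concat_comp_pair (w : List Bool) (c : Bool) (G : Bool → Term) :
    CMEq (comp (ofWord (w ++ [c])) (pair (G false) (G true))) (comp (ofWord w) (G c)) := by
  refine (ofWord_append_comp w [c] _).trans ((CMEq.refl _).comp_congr ?_)
  refine (CMEq.assoc _ _ _).trans (((CMEq.refl _).comp_congr (.one_mul _)).trans ?_)
  cases c
  · exact .proj_left _ _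
  · exact .proj_right _ _

theorem exists_cmEq_comp_ofWord_of_nil_mem {es : List (List Bool × Term)}
    (hes : (es.map Prod.fst).Pairwise SuffixIncomparable) {t : Term} (ht : ([], t) ∈ es) :
    ∃ G, ∀ e ∈ es, CMEq (comp (ofWord e.1) G) e.2 := by
  have : Std.Symm fun e e' : List Bool × Term => SuffixIncomparable e.1 e'.1 :=
    ⟨fun _ _ h => h.symm⟩
  refine ⟨t, fun e he => ?_⟩
  obtain rfl : e = ([], t) := by
    by_contra hne
    exact ((List.pairwise_map.1 hes).forall he ht hne).2 List.nil_suffix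
  exact .one_mul t

/-- A trie: `(w ++ [c]) * ⟨G false, G true⟩ = w * G c`, so one recurses on the last letters, the
empty word being possible only for a single entry. -/
theorem exists_cmEq_comp_ofWord (es : List (List Bool × Term))
    (hes : (es.map Prod.fst).Pairwise SuffixIncomparable) :
    ∃ G, ∀ e ∈ es, CMEq (comp (ofWord e.1) G) e.2 := by
  suffices ∀ n (es : List (List Bool × Term)), (∀ e ∈ es, e.1.length < n) →
      (es.map Prod.fst).Pairwise SuffixIncomparable →
      ∃ G, ∀ e ∈ es, CMEq (comp (ofWord e.1) G) e.2 from
    this _ es (fun e he => Nat.lt_succ_of_le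
      (List.le_sum_of_mem (List.mem_map_of_mem (f := fun e => e.1.length) he))) hes
  intro n
  induction n with
  | zero => exact fun es hlen _ => ⟨I, fun e he => absurd (hlen e he) (Nat.not_lt_zero _)⟩
  | succ n ih =>
    intro es hlen hes
    by_cases hnil : ∃ t, ([], t) ∈ es
    · obtain ⟨t, ht⟩ := hnil
      exact exists_cmEq_comp_ofWord_of_nil_mem hes ht
    choose G hG using fun c => ih (stripLast c es)
      (fun ⟨w, t⟩ he => by simpa using hlen _ (mem_stripLast.1 he)) (pairwise_stripLast hes)
    refine ⟨pair (G false) (G true), fun ⟨w, t⟩ he => ?_⟩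
    obtain rfl | ⟨w, c, rfl⟩ := List.eq_nil_or_concat' w
    · exact absurd ⟨t, he⟩ hnil
    · exact (cmEq_ofWord_concat_comp_pair w c G).trans (hG c (w, t) (mem_stripLast.2 he))

theorem IsShiftTree.exists_cmEq_comp {N : Term} (hN : IsShiftTree N)
    (h : (leafWords N).Pairwise SuffixIncomparable) (A : Term) : ∃ G, CMEq (comp N G) A := by
  obtain ⟨G, hG⟩ := exists_cmEq_comp_ofWord ((leafWords N).zip (leafTargets N A))
    (by rwa [List.map_fst_zip (length_leafTargets N A).ge])
  exact ⟨G, hN.cmEq_comp_of_forall_mem_zip hG⟩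

/-- Characterization of right invertibility: `F` is right invertible in CM iff
in its CM normal form `N` no leaf shift is a final segment (suffix of the word
read left to right) of the shift at another leaf. -/
theorem right_invertible_iff_no_suffix (F N : Term)
    (hred : Red rules17 F N) (hnf : NF rules17 N) :
    RightInvCM F ↔
      ∀ (i j : ℕ) (hi : i < (leafWords N).length) (hj : j < (leafWords N).length),
        i ≠ j → ¬ ((leafWords N).get ⟨i, hi⟩ <:+ (leafWords N).get ⟨j, hj⟩) := by
  have hFN : CMEq F N := hred.cmEq
  have hN : IsShiftTree N := .of_nf hnf
  refine Iff.trans ?_ (List.pairwise_and_swap_iff_forall_ne (R := fun u v => ¬ u <:+ v))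
  constructor
  · rintro ⟨G, hG⟩
    exact hN.pairwise_suffixIncomparable_of_cmEq_comp ((hFN.symm.comp_congr (.refl G)).trans hG)
  · intro h
    obtain ⟨G, hG⟩ := hN.exists_cmEq_comp h I
    exact ⟨G, (hFN.comp_congr (.refl G)).trans hG⟩
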